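/- For all n ≥ 2, the coefficient of t^{-n} in V_n(t) equals (-1)^{n-2}; in particular the lowest-degree term of the Jones polynomial of W(3,n) is ±t^{-n}. -/

import Mathlib

open Polynomial

/-- The six coefficient polynomials `(C_{n,0}, C_{n,1}, C_{n,2}, C_{n,12}, C_{n,21}, C_{n,121})`. -/
structure CVec where
  c0 : Polynomial ℤ
  c1 : Polynomial ℤ
  c2 : Polynomial ℤ
  c12 : Polynomial ℤ
  c21 : Polynomial ℤ
  c121 : Polynomial ℤ

/-- One step of the recursion of Theorem 3.3. -/
noncomputable def Cstep (p : CVec) : CVec where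
  c0 := X ^ 2 * p.c21 - X * (X - 1) * p.c1
  c1 := -(X - 1) ^ 2 * p.c1 - (X - 1) * p.c0 + X ^ 2 * p.c121
  c2 := X * p.c1
  c12 := (X - 1) * p.c1 + p.c0
  c21 := -(X - 1) * p.c2 + X * p.c12 - (X - 1) ^ 2 * p.c21 + X * (X - 1) * p.c121
  c121 := p.c2 + (X - 1) * p.c21

/-- `Cw n` is the vector of polynomials `C_{n,*}`; the value at `n = 0` is junk. -/
noncomputable def Cw : ℕ → CVec
  | 0 => ⟨0, 0, 0, 0, 0, 0⟩
  | 1 => ⟨0, -(X - 1), 0, 1, 0, 0⟩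
  | (n + 2) => Cstep (Cw (n + 1))

open LaurentPolynomial in
/-- The Jones polynomial `V_{W(3,n)}(t)` of the weaving knot `W(3,n)`, as a Laurent
polynomial in `t` (here `T k` denotes `t^k`). -/
noncomputable def V (n : ℕ) : LaurentPolynomial ℤ :=
  T (-(n : ℤ) - 1) *
    ((1 + T 1) ^ 2 * toLaurent (Cw n).c0 +
      (1 + T 1) * T 2 * toLaurent ((Cw n).c1 + (Cw n).c2) +
      T 4 * toLaurent ((Cw n).c12 + (Cw n).c21))

/-!
The coefficient of `t^(-n)` in `V n` is the linear coefficient of the polynomial bracket, and only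
`(1 + t)^2 C_{n,0}` contributes to it, giving `C_{n,0}[1] + 2 C_{n,0}(0) = C_{n,0}[1]`.
The recursion gives `C_{n,0}[1] = C_{n-1,1}(0)` and `C_{n,1}(0) = -C_{n-1,1}(0) + C_{n-1,0}(0)
= -C_{n-1,1}(0)`, so everything reduces to the sign alternation starting from `C_{1,1}(0) = 1`.
-/

open LaurentPolynomial

theorem coeff_T_mul_toLaurent {R : Type*} [Semiring R] (a : ℤ) (p : R[X]) (k : ℕ) :
    (T a * toLaurent p).coeff (a + k) = p.coeff k := by
  rw [T, AddMonoidAlgebra.coeff_single_mul_apply, neg_add_cancel_left, one_mul, coeff_toLaurent]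
  exact Finsupp.mapDomain_apply Nat.castEmbedding.injective _ k

theorem Cw_c0_coeff_zero : ∀ n, (Cw n).c0.coeff 0 = 0
  | 0 | 1 => rfl
  | n + 2 => by simp [Cw, Cstep, mul_assoc]

theorem Cw_succ_c1_coeff_zero : ∀ n, (Cw (n + 1)).c1.coeff 0 = (-1) ^ n
  | 0 => by simp [Cw]
  | n + 1 => by
    have ih := Cw_succ_c1_coeff_zero n
    simp [Cw, Cstep, mul_coeff_zero, Cw_c0_coeff_zero, ih, pow_succ]

theorem Cw_add_two_c0_coeff_one (n : ℕ) : (Cw (n + 2)).c0.coeff 1 = (-1) ^ n := by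
  simp [Cw, Cstep, mul_assoc, coeff_X_pow_mul', coeff_X_mul, mul_coeff_zero,
    Cw_succ_c1_coeff_zero]

noncomputable def Vpoly (n : ℕ) : ℤ[X] :=
  (1 + X) ^ 2 * (Cw n).c0 + (1 + X) * X ^ 2 * ((Cw n).c1 + (Cw n).c2) +
    X ^ 4 * ((Cw n).c12 + (Cw n).c21)

theorem V_eq_T_mul_toLaurent_Vpoly (n : ℕ) :
    V n = T (-(n : ℤ) - 1) * toLaurent (Vpoly n) := by
  simp [V, Vpoly, toLaurent_X_pow]

theorem Vpoly_coeff_one (n : ℕ) :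
    (Vpoly n).coeff 1 = (Cw n).c0.coeff 1 + 2 * (Cw n).c0.coeff 0 := by
  simp [Vpoly, mul_assoc, coeff_X_pow_mul', add_sq, add_mul, coeff_X_mul]

theorem V_lowest_coeff : ∀ n : ℕ, 2 ≤ n → (V n).coeff (-(n : ℤ)) = (-1) ^ (n - 2) := by
  intro n hn
  obtain ⟨m, rfl⟩ := Nat.exists_eq_add_of_le' hn
  have hdeg : -((m + 2 : ℕ) : ℤ) = (-((m + 2 : ℕ) : ℤ) - 1) + (1 : ℕ) := by ring
  rw [hdeg, V_eq_T_mul_toLaurent_Vpoly, coeff_T_mul_toLaurent, Vpoly_coeff_one,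
    Cw_c0_coeff_zero, Cw_add_two_c0_coeff_one]
  simp
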